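/- arXiv:1104.1967 — 3 statements merged into one kernel-verified Lean document; each statement's English description precedes it below -/
import Mathlib

section
/- For every smooth compactly supported function f : ℝ → ℝ and every real p ≥ 2, the integral of |f'(x)|^p over ℝ is at most (√(p-1))^p times the integral of |f(x)·f''(x)|^(p/2) over ℝ. -/
open MeasureTheory
open Real Filter

lemma hasDerivAt_absrpow_mul {p : ℝ} (hp : 2 ≤ p) (t : ℝ) :
    HasDerivAt (fun s : ℝ => |s| ^ (p - 2) * s) ((p - 1) * |t| ^ (p - 2)) t := by
  rcases eq_or_lt_of_le hp with hpe | hpl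
  · subst hpe
    norm_num
    exact hasDerivAt_id' t
  · rcases eq_or_ne t 0 with rfl | ht
    · have h0 : (p - 1) * |(0:ℝ)| ^ (p - 2) = 0 := by
        rw [abs_zero, Real.zero_rpow (by linarith)]; ring
      rw [h0, hasDerivAt_iff_tendsto_slope]
      have hcont : Tendsto (fun s : ℝ => |s| ^ (p - 2)) (nhds 0) (nhds 0) := by
        have : ContinuousAt (fun s : ℝ => |s| ^ (p - 2)) 0 :=
          (continuous_abs.continuousAt).rpow_const (Or.inr (by linarith))
        simpa [Real.zero_rpow (show p - 2 ≠ 0 by linarith)] using this.tendsto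
      refine (hcont.mono_left nhdsWithin_le_nhds).congr' ?_
      filter_upwards [self_mem_nhdsWithin] with s hs
      have hs' : s ≠ 0 := hs
      rw [slope_def_field]
      field_simp
      simp
    · have habs := hasDerivAt_abs ht
      have hrpow : HasDerivAt (fun x : ℝ => x ^ (p - 2)) ((p - 2) * |t| ^ (p - 2 - 1)) |t| :=
        Real.hasDerivAt_rpow_const (Or.inl (abs_ne_zero.mpr ht))
      have hcomp : HasDerivAt (fun s : ℝ => |s| ^ (p - 2))
          ((p - 2) * |t| ^ (p - 2 - 1) * (SignType.sign t : ℝ)) t := hrpow.comp t habs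
      have hmul : HasDerivAt (fun s : ℝ => |s| ^ (p - 2) * s) _ t := hcomp.mul (hasDerivAt_id t)
      convert hmul using 1
      have hst : ((SignType.sign t : ℝ)) * t = |t| := by
        rcases lt_or_gt_of_ne ht with h | h
        · simp [sign_neg h, abs_of_neg h]
        · simp [sign_pos h, abs_of_pos h]
      have h1 : |t| ^ (p - 2) = |t| ^ (p - 2 - 1) * |t| := by
        rw [← Real.rpow_add_one (abs_ne_zero.mpr ht)]; ring_nf
      simp only [id_eq, mul_one]
      have h2 : (p - 2) * |t| ^ (p - 2 - 1) * (SignType.sign t : ℝ) * t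
          = (p - 2) * (|t| ^ (p - 2 - 1) * |t|) := by rw [← hst]; ring
      rw [h2, ← h1]; ring

theorem gagliardo_nirenberg_second_order
    (f : ℝ → ℝ) (hf : ContDiff ℝ (⊤ : ℕ∞) f) (hsupp : HasCompactSupport f)
    (p : ℝ) (hp : 2 ≤ p) :
    ∫ x : ℝ, |deriv f x| ^ p ≤
      (Real.sqrt (p - 1)) ^ p * ∫ x : ℝ, |f x * deriv (deriv f) x| ^ (p / 2) := by
  have hp0 : (0:ℝ) < p := by linarith
  set g := deriv f with hg_def
  set h := deriv g with hh_def
  have hf' : ContDiff ℝ (⊤ : ℕ∞) f := hf.of_le (by simp)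
  have hfd : Differentiable ℝ f := hf'.differentiable (by simp)
  have hfc : Continuous f := hf.continuous
  have hg_cd : ContDiff ℝ (⊤ : ℕ∞) g := (contDiff_infty_iff_deriv.mp hf').2
  have hgd : Differentiable ℝ g := hg_cd.differentiable (by simp)
  have hgc : Continuous g := hgd.continuous
  have hhc : Continuous h := ((contDiff_infty_iff_deriv.mp hg_cd).2).continuous
  have hgsupp : HasCompactSupport g := hsupp.deriv
  have hhsupp : HasCompactSupport h := hgsupp.deriv
  set v : ℝ → ℝ := fun x => |g x| ^ (p - 2) * g x with hv_def
  set v' : ℝ → ℝ := fun x => (p - 1) * |g x| ^ (p - 2) * h x with hv'_def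
  -- derivative facts
  have hud : ∀ x, HasDerivAt f (g x) x := fun x => (hfd x).hasDerivAt
  have hvd : ∀ x, HasDerivAt v (v' x) x := by
    intro x
    have := (hasDerivAt_absrpow_mul hp (g x)).comp x ((hgd x).hasDerivAt)
    simpa [hv_def, hv'_def, hh_def, mul_assoc, Function.comp_def] using this
  -- continuity
  have hFc : Continuous (fun x => |g x| ^ (p - 2)) :=
    (continuous_abs.comp hgc).rpow_const (fun x => Or.inr (by linarith))
  have hvc : Continuous v := hFc.mul hgc
  have hv'c : Continuous v' := ((continuous_const.mul hFc).mul hhc)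
  -- integrability
  have huv' : Integrable (f * v') :=
    (hfc.mul hv'c).integrable_of_hasCompactSupport hsupp.mul_right
  have hu'v : Integrable (g * v) :=
    (hgc.mul hvc).integrable_of_hasCompactSupport hgsupp.mul_right
  have huv : Integrable (f * v) :=
    (hfc.mul hvc).integrable_of_hasCompactSupport hsupp.mul_right
  have key := integral_mul_deriv_eq_deriv_mul_of_integrable (fun x _ => hud x) (fun x _ => hvd x) huv' hu'v huv
  -- identify ∫ g v with ∫ |g|^p
  have hgv : ∀ x, g x * v x = |g x| ^ p := by
    intro x
    rcases eq_or_ne (g x) 0 with h0 | hne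
    · simp [hv_def, h0, Real.zero_rpow hp0.ne']
    · have h2 : |g x| ^ (2:ℝ) = g x * g x := by
        rw [show (2:ℝ) = ((2:ℕ):ℝ) by norm_num, Real.rpow_natCast, sq_abs, sq]
      rw [show p = (p - 2) + 2 by ring, Real.rpow_add (abs_pos.mpr hne), h2, hv_def]
      ring
  have hkey2 : ∫ x : ℝ, |g x| ^ p = - ∫ x, f x * v' x := by
    rw [key, neg_neg]
    exact integral_congr_ae (Eventually.of_forall fun x => (hgv x).symm)
  -- bound by integral of absolute values
  have habs_int : Integrable (fun x => |g x| ^ (p - 2) * |f x * h x|) := by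
    have : Continuous (fun x => |g x| ^ (p - 2) * |f x * h x|) :=
      hFc.mul ((hfc.mul hhc).abs)
    refine this.integrable_of_hasCompactSupport ?_
    have h1 : HasCompactSupport (fun x => |f x * h x|) :=
      HasCompactSupport.comp_left (g := abs) hsupp.mul_right abs_zero
    exact (h1.mul_left)
  have step1 : ∫ x : ℝ, |g x| ^ p
      ≤ (p - 1) * ∫ x : ℝ, |g x| ^ (p - 2) * |f x * h x| := by
    rw [hkey2]
    have h1 : -∫ x, f x * v' x ≤ |∫ x, f x * v' x| := neg_le_abs _
    have h2 : |∫ x, f x * v' x| ≤ ∫ x, |f x| * |v' x| := by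
      have := norm_integral_le_integral_norm (μ := volume) (fun x => f x * v' x)
      simpa [Real.norm_eq_abs, abs_mul] using this
    have h3 : ∫ x, |f x| * |v' x| = (p - 1) * ∫ x, |g x| ^ (p - 2) * |f x * h x| := by
      rw [← integral_const_mul]
      refine integral_congr_ae (Eventually.of_forall fun x => ?_)
      have hq : (0:ℝ) ≤ |g x| ^ (p - 2) := Real.rpow_nonneg (abs_nonneg _) _
      simp only [hv'_def, abs_mul, abs_of_nonneg hq, abs_of_nonneg (by linarith : (0:ℝ) ≤ p - 1)]
      ring
    linarith
  -- nonnegativity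
  have hA_nonneg : (0:ℝ) ≤ ∫ x : ℝ, |g x| ^ p :=
    integral_nonneg fun x => Real.rpow_nonneg (abs_nonneg _) _
  have hB_nonneg : (0:ℝ) ≤ ∫ x : ℝ, |f x * h x| ^ (p / 2) :=
    integral_nonneg fun x => Real.rpow_nonneg (abs_nonneg _) _
  have hsq : Real.sqrt (p - 1) ^ p = (p - 1) ^ (p / 2) := by
    rw [Real.sqrt_eq_rpow, ← Real.rpow_mul (by linarith : (0:ℝ) ≤ p - 1)]
    congr 1
    ring
  rw [hsq]
  rcases eq_or_lt_of_le hp with hpe | hpl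
  · -- p = 2
    subst hpe
    norm_num at step1 ⊢
    simpa using step1
  · -- p > 2 : Hölder
    set r : ℝ := p / (p - 2) with hr_def
    set s : ℝ := p / 2 with hs_def
    have hp2 : (0:ℝ) < p - 2 := by linarith
    have hconj : Real.HolderConjugate r s := by
      constructor
      · rw [hr_def, hs_def, inv_div, inv_div, ← add_div, inv_one, div_eq_one_iff_eq hp0.ne']
        ring
      · rw [hr_def]; positivity
      · rw [hs_def]; positivity
    have hF_mem : MemLp (fun x => |g x| ^ (p - 2)) (ENNReal.ofReal r) volume := by
      refine hFc.memLp_of_hasCompactSupport ?_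
      exact HasCompactSupport.comp_left (g := fun t : ℝ => |t| ^ (p - 2)) hgsupp
        (by simp [Real.zero_rpow hp2.ne'])
    have hG_mem : MemLp (fun x => |f x * h x|) (ENNReal.ofReal s) volume := by
      refine ((hfc.mul hhc).abs).memLp_of_hasCompactSupport ?_
      exact HasCompactSupport.comp_left (g := abs) hsupp.mul_right abs_zero
    have holder := integral_mul_le_Lp_mul_Lq_of_nonneg hconj
      (Eventually.of_forall fun x => Real.rpow_nonneg (abs_nonneg (g x)) _)
      (Eventually.of_forall fun x => abs_nonneg _) hF_mem hG_mem
    have hFr : ∀ x : ℝ, (|g x| ^ (p - 2)) ^ r = |g x| ^ p := by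
      intro x
      rw [← Real.rpow_mul (abs_nonneg _)]
      congr 1
      rw [hr_def]
      field_simp
    have hIr : (∫ a : ℝ, (|g a| ^ (p - 2)) ^ r) = ∫ x : ℝ, |g x| ^ p :=
      integral_congr_ae (Filter.Eventually.of_forall fun x => hFr x)
    rw [hIr] at holder
    -- combine
    set A : ℝ := ∫ x : ℝ, |g x| ^ p with hA_def
    set B : ℝ := ∫ x : ℝ, |f x * h x| ^ s with hB_def
    have hmain : A ≤ (p - 1) * (A ^ (1 / r) * B ^ (1 / s)) := by
      calc A ≤ (p - 1) * ∫ x : ℝ, |g x| ^ (p - 2) * |f x * h x| := step1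
        _ ≤ (p - 1) * (A ^ (1 / r) * B ^ (1 / s)) := by
            apply mul_le_mul_of_nonneg_left holder (by linarith)
    rcases eq_or_lt_of_le hA_nonneg with hA0 | hApos
    · rw [← hA0]
      exact mul_nonneg (Real.rpow_nonneg (by linarith) _) hB_nonneg
    · -- A > 0
      have h1r : 1 / r = 1 - 2 / p := by
        rw [hr_def, one_div_div]
        field_simp
      have h1s : 1 / s = 2 / p := by rw [hs_def, one_div_div]
      have ha_pos : (0:ℝ) < 2 / p := by positivity
      have ha_lt : 2 / p ≤ 1 := by
        rw [div_le_one hp0]; linarith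
      have hA_split : A = A ^ (1 - 2 / p) * A ^ (2 / p) := by
        rw [← Real.rpow_add hApos]
        norm_num
      have hcancel : A ^ (2 / p) ≤ (p - 1) * B ^ (2 / p) := by
        have hpow_pos : (0:ℝ) < A ^ (1 - 2 / p) := Real.rpow_pos_of_pos hApos _
        have := hmain
        rw [h1r, h1s] at this
        nth_rewrite 1 [hA_split] at this
        have h2 : A ^ (1 - 2/p) * A ^ (2/p) ≤ A ^ (1 - 2/p) * ((p - 1) * B ^ (2/p)) := by
          calc A ^ (1 - 2/p) * A ^ (2/p) ≤ (p-1) * (A ^ (1 - 2/p) * B ^ (2/p)) := this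
            _ = A ^ (1 - 2/p) * ((p - 1) * B ^ (2/p)) := by ring
        exact le_of_mul_le_mul_left h2 hpow_pos
      have hfin : A ≤ (p - 1) ^ (p / 2) * B := by
        have h4 : A = (A ^ (2 / p)) ^ (p / 2) := by
          rw [← Real.rpow_mul hA_nonneg, show 2 / p * (p / 2) = 1 by field_simp, Real.rpow_one]
        rw [h4]
        calc (A ^ (2/p)) ^ (p/2) ≤ ((p - 1) * B ^ (2/p)) ^ (p/2) := by
              apply Real.rpow_le_rpow (Real.rpow_nonneg hA_nonneg _) hcancel (by positivity)
          _ = (p - 1) ^ (p/2) * B := by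
              rw [Real.mul_rpow (by linarith) (Real.rpow_nonneg hB_nonneg _),
                ← Real.rpow_mul hB_nonneg, show 2 / p * (p / 2) = 1 by field_simp,
                Real.rpow_one]
      exact hfin
end

section
/- Let θ > 0 and let f : ℝ → ℝ be smooth, nonnegative, with compactly supported derivative. Then the essential supremum of |f'(x)|/f(x)^θ over {x : f(x) > 0} is at most (1/√θ) times the essential supremum of √(f(x)|f''(x)|)/f(x)^θ over {x : f(x) > 0}. -/
open MeasureTheory Set

lemma pos_of_dne (f : ℝ → ℝ) (hnn : ∀ x, 0 ≤ f x) {t : ℝ}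
    (h : deriv f t ≠ 0) : 0 < f t := by
  rcases (hnn t).lt_or_eq with h' | h'
  · exact h'
  · have hmin : IsLocalMin f t :=
      Filter.Eventually.of_forall (fun y => by rw [← h']; exact hnn y)
    exact absurd hmin.deriv_eq_zero h

lemma key_pos (θ C : ℝ) (hθ : 0 < θ) (f : ℝ → ℝ) (hf : ContDiff ℝ (⊤ : ℕ∞) f)
    (hnn : ∀ x, 0 ≤ f x) (hsupp : HasCompactSupport (deriv f))
    (hbound : ∀ y, 0 < f y → f y * |deriv (deriv f) y| ≤ C * (f y ^ θ) ^ 2)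
    (x₀ : ℝ) (hx₀ : 0 < f x₀) (hd : 0 < deriv f x₀) :
    (deriv f x₀) ^ 2 ≤ C / θ * (f x₀ ^ θ) ^ 2 := by
  have hfi : ContDiff ℝ (⊤ : ℕ∞) f := hf.of_le (by simp)
  have hdf : Differentiable ℝ f := hfi.differentiable (by simp)
  have hf2 : ContDiff ℝ (⊤ : ℕ∞) (deriv f) := (contDiff_infty_iff_deriv.mp hfi).2
  have hdf2 : Differentiable ℝ (deriv f) := hf2.differentiable (by simp)
  have hcd : Continuous (deriv f) := hdf2.continuous
  have hC : 0 ≤ C := by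
    have h1 := hbound x₀ hx₀
    have h2 : 0 < (f x₀ ^ θ) ^ 2 := by positivity
    nlinarith [abs_nonneg (deriv (deriv f) x₀), hx₀.le,
      mul_nonneg hx₀.le (abs_nonneg (deriv (deriv f) x₀))]
  by_contra hcon
  push_neg at hcon
  set ψ : ℝ → ℝ := fun t => (deriv f t) ^ 2 - C / θ * (f t ^ θ) ^ 2 with hψdef
  have hψ₀ : 0 < ψ x₀ := by simp only [hψdef]; linarith
  set ψ₀ := ψ x₀ with hψ₀def
  set s := Real.sqrt ψ₀ with hsdef
  have hs : 0 < s := Real.sqrt_pos.mpr hψ₀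
  have hs2 : s ^ 2 = ψ₀ := Real.sq_sqrt hψ₀.le
  obtain ⟨R, hR⟩ := hsupp.isBounded.subset_closedBall 0
  set a := -(|R| + |x₀| + 1) with hadef
  have hax₀ : a < x₀ := by
    have := abs_nonneg R; have := neg_abs_le x₀; simp only [hadef]; linarith
  have hda : deriv f a = 0 := by
    by_contra h
    have h0 : a ∈ tsupport (deriv f) := subset_tsupport _ h
    have h2 := hR h0
    rw [Metric.mem_closedBall, Real.dist_eq, sub_zero] at h2
    have h1 : |a| = |R| + |x₀| + 1 := by
      rw [hadef, abs_neg, abs_of_nonneg (by positivity)]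
    have := le_abs_self R
    have := abs_nonneg x₀
    linarith
  set S : Set ℝ := {x | x ∈ Icc a x₀ ∧ ∀ t ∈ Icc x x₀, s / 2 ≤ deriv f t}
    with hSdef
  have hx₀S : x₀ ∈ S := by
    refine ⟨⟨hax₀.le, le_refl _⟩, fun t ht => ?_⟩
    have heq : t = x₀ := le_antisymm ht.2 ht.1
    subst heq
    have h1 : ψ₀ ≤ (deriv f t) ^ 2 := by
      have h0 : ψ₀ = (deriv f t) ^ 2 - C / θ * (f t ^ θ) ^ 2 := by
        simp only [hψ₀def, hψdef]
      rw [h0]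
      exact sub_le_self _ (by positivity)
    have h2 : s ≤ deriv f t := by
      calc s ≤ Real.sqrt ((deriv f t) ^ 2) := Real.sqrt_le_sqrt h1
        _ = deriv f t := by rw [Real.sqrt_sq hd.le]
    linarith
  have hbdd : BddBelow S := ⟨a, fun x hx => hx.1.1⟩
  set c := sInf S with hcdef
  have hca : a ≤ c := le_csInf ⟨x₀, hx₀S⟩ (fun x hx => hx.1.1)
  have hcx₀ : c ≤ x₀ := csInf_le hbdd hx₀S
  have hup : ∀ x ∈ S, ∀ t, x ≤ t → t ≤ x₀ → t ∈ S := by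
    intro x hx t hxt htx₀
    exact ⟨⟨le_trans hx.1.1 hxt, htx₀⟩, fun u hu => hx.2 u ⟨le_trans hxt hu.1, hu.2⟩⟩
  have stepA : ∀ x ∈ S, ψ₀ ≤ ψ x ∧ s ≤ deriv f x := by
    intro x hx
    have hxx₀ : x ≤ x₀ := hx.1.2
    have fpos : ∀ t ∈ Icc x x₀, 0 < f t := by
      intro t ht
      exact pos_of_dne f hnn (ne_of_gt (lt_of_lt_of_le (by positivity) (hx.2 t ht)))
    have fdpos : ∀ t ∈ Icc x x₀, 0 < deriv f t := by
      intro t ht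
      exact lt_of_lt_of_le (by positivity) (hx.2 t ht)
    have hψcont : Continuous ψ := by
      apply Continuous.sub
      · exact hcd.pow 2
      · exact continuous_const.mul ((hdf.continuous.rpow_const
          (fun y => Or.inr hθ.le)).pow 2)
    have hderivψ : ∀ t ∈ Ioo x x₀, HasDerivAt ψ
        (2 * deriv f t * (deriv (deriv f) t - C * (f t ^ θ * f t ^ (θ - 1)))) t := by
      intro t ht
      have htm : t ∈ Icc x x₀ := Ioo_subset_Icc_self ht
      have h1 : HasDerivAt (deriv f) (deriv (deriv f) t) t := (hdf2 t).hasDerivAt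
      have h2 : HasDerivAt f (deriv f t) t := (hdf t).hasDerivAt
      have h3 : HasDerivAt (fun u => f u ^ θ) (deriv f t * θ * f t ^ (θ - 1)) t :=
        h2.rpow_const (Or.inl (ne_of_gt (fpos t htm)))
      have h4 := (h1.pow 2).sub ((h3.pow 2).const_mul (C / θ))
      convert h4 using 1
      · rfl
      · rfl
      · rfl
      have hθne : θ ≠ 0 := ne_of_gt hθ
      field_simp
      ring
    have hanti : AntitoneOn ψ (Icc x x₀) := by
      apply antitoneOn_of_deriv_nonpos (convex_Icc x x₀) (hψcont.continuousOn)
      · intro t ht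
        rw [interior_Icc] at ht
        exact ((hderivψ t ht).differentiableAt).differentiableWithinAt
      · intro t ht
        rw [interior_Icc] at ht
        rw [(hderivψ t ht).deriv]
        have htm : t ∈ Icc x x₀ := Ioo_subset_Icc_self ht
        have hft : 0 < f t := fpos t htm
        have hft' : 0 < deriv f t := fdpos t htm
        have hb := hbound t hft
        have habs : deriv (deriv f) t ≤ C * ((f t ^ θ) ^ 2 / f t) := by
          rw [← mul_div_assoc, le_div_iff₀ hft]
          calc deriv (deriv f) t * f t ≤ |deriv (deriv f) t| * f t :=
                mul_le_mul_of_nonneg_right (le_abs_self _) hft.le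
            _ = f t * |deriv (deriv f) t| := mul_comm _ _
            _ ≤ C * (f t ^ θ) ^ 2 := hb
        have h4 : f t ^ θ * f t ^ (θ - 1) = (f t ^ θ) ^ 2 / f t := by
          rw [Real.rpow_sub_one (ne_of_gt hft) θ]; ring
        rw [h4]
        refine mul_nonpos_of_nonneg_of_nonpos (by positivity) ?_
        linarith
    have hψx : ψ₀ ≤ ψ x := hanti ⟨le_refl x, hxx₀⟩ ⟨hxx₀, le_refl x₀⟩ hxx₀
    refine ⟨hψx, ?_⟩
    have h1 : ψ₀ ≤ (deriv f x) ^ 2 := by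
      refine hψx.trans ?_
      have h0 : ψ x = (deriv f x) ^ 2 - C / θ * (f x ^ θ) ^ 2 := by
        simp only [hψdef]
      rw [h0]
      exact sub_le_self _ (by positivity)
    calc s ≤ Real.sqrt ((deriv f x) ^ 2) := Real.sqrt_le_sqrt h1
      _ = deriv f x := Real.sqrt_sq (fdpos x ⟨le_refl x, hxx₀⟩).le
  have hsubS : ∀ t, c < t → t ≤ x₀ → t ∈ S := by
    intro t hct htx₀
    obtain ⟨x, hxS, hxt⟩ := exists_lt_of_csInf_lt ⟨x₀, hx₀S⟩ hct
    exact hup x hxS t hxt.le htx₀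
  have hcS : c ∈ S := by
    refine ⟨⟨hca, hcx₀⟩, fun t ht => ?_⟩
    rcases eq_or_lt_of_le ht.1 with heq | hlt
    · rw [← heq]
      rcases eq_or_lt_of_le hcx₀ with heq2 | hlt2
      · rw [heq2]; exact hx₀S.2 x₀ ⟨le_refl _, le_refl _⟩
      · have hev : ∀ᶠ u in nhdsWithin c (Ioi c), s / 2 ≤ deriv f u := by
          filter_upwards [Ioc_mem_nhdsGT_of_mem ⟨le_refl c, hlt2⟩] with u hu
          have := (stepA u (hsubS u hu.1 hu.2)).2
          linarith
        exact ge_of_tendsto ((hcd.continuousAt).continuousWithinAt.tendsto) hev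
    · exact (hsubS t hlt ht.2).2 t ⟨le_refl t, ht.2⟩
  have hdc : s ≤ deriv f c := (stepA c hcS).2
  rcases eq_or_lt_of_le hca with heq | hlt
  · rw [← heq] at hdc
    rw [hda] at hdc
    linarith
  · have hopen : IsOpen {u : ℝ | s / 2 < deriv f u} := isOpen_lt continuous_const hcd
    have hmem : c ∈ {u : ℝ | s / 2 < deriv f u} := by
      simp only [mem_setOf_eq]; linarith
    obtain ⟨ε, hε, hball⟩ := Metric.isOpen_iff.mp hopen c hmem
    set δ := min (ε / 2) (c - a) with hδdef
    have hδpos : 0 < δ := lt_min (by linarith) (by linarith)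
    have hcδ : c - δ ∈ S := by
      refine ⟨⟨by simp only [hδdef]; have := min_le_right (ε/2) (c-a); linarith,
        by linarith⟩, fun t ht => ?_⟩
      rcases le_or_gt t c with h1 | h1
      · have hmb : t ∈ Metric.ball c ε := by
          rw [Metric.mem_ball, Real.dist_eq, abs_sub_lt_iff]
          constructor
          · linarith
          · have h2 := min_le_left (ε/2) (c-a)
            have h3 := ht.1
            simp only [hδdef] at h3 ⊢
            linarith
        exact (hball hmb).le
      · exact (hsubS t h1 ht.2).2 t ⟨le_refl t, ht.2⟩
    have : c ≤ c - δ := csInf_le hbdd hcδ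
    linarith

lemma key_abs (θ C : ℝ) (hθ : 0 < θ) (hC : 0 ≤ C) (f : ℝ → ℝ) (hf : ContDiff ℝ (⊤ : ℕ∞) f)
    (hnn : ∀ x, 0 ≤ f x) (hsupp : HasCompactSupport (deriv f))
    (hbound : ∀ y, 0 < f y → f y * |deriv (deriv f) y| ≤ C * (f y ^ θ) ^ 2)
    (x₀ : ℝ) (hx₀ : 0 < f x₀) :
    |deriv f x₀| ≤ Real.sqrt (C / θ) * f x₀ ^ θ := by
  have hfθ : 0 < f x₀ ^ θ := Real.rpow_pos_of_pos hx₀ θ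
  have hsq : (deriv f x₀) ^ 2 ≤ C / θ * (f x₀ ^ θ) ^ 2 := by
    rcases lt_trichotomy (deriv f x₀) 0 with hneg | hzero | hpos
    · -- reflect
      set g : ℝ → ℝ := fun x => f (-x) with hgdef
      have hg : ContDiff ℝ (⊤ : ℕ∞) g := hf.comp (contDiff_neg)
      have hgd : deriv g = fun x => -deriv f (-x) := by
        funext x
        exact deriv_comp_neg f x
      have hgd2 : ∀ x, deriv (deriv g) x = deriv (deriv f) (-x) := by
        intro x
        rw [hgd]
        have : deriv (fun x => -deriv f (-x)) x
            = -deriv (fun x => deriv f (-x)) x := deriv.neg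
        rw [this, deriv_comp_neg (deriv f) x, neg_neg]
      have hgsupp : HasCompactSupport (deriv g) := by
        rw [hgd]
        have h1 : HasCompactSupport (deriv f ∘ (Homeomorph.neg ℝ)) :=
          hsupp.comp_homeomorph (Homeomorph.neg ℝ)
        have h2 : (fun x => -deriv f (-x)) = -(deriv f ∘ (Homeomorph.neg ℝ)) := by
          funext x; simp [Homeomorph.neg]
        rw [h2]
        exact h1.neg
      have hgnn : ∀ x, 0 ≤ g x := fun x => hnn (-x)
      have hgbound : ∀ y, 0 < g y → g y * |deriv (deriv g) y| ≤ C * (g y ^ θ) ^ 2 := by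
        intro y hy
        rw [hgd2]
        exact hbound (-y) hy
      have hgpos : 0 < deriv g (-x₀) := by
        rw [hgd]; simp only [neg_neg]; linarith
      have := key_pos θ C hθ g hg hgnn hgsupp hgbound (-x₀) (by
        simp only [hgdef, neg_neg]; exact hx₀) hgpos
      rw [hgd] at this
      simp only [hgdef, neg_neg] at this
      calc (deriv f x₀) ^ 2 = (-deriv f x₀) ^ 2 := by ring
        _ ≤ C / θ * (f x₀ ^ θ) ^ 2 := this
    · rw [hzero]
      have h0 : (0:ℝ) ^ 2 = 0 := by norm_num
      rw [h0]
      positivity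
    · exact key_pos θ C hθ f hf hnn hsupp hbound x₀ hx₀ hpos
  calc |deriv f x₀| = Real.sqrt ((deriv f x₀) ^ 2) := (Real.sqrt_sq_eq_abs _).symm
    _ ≤ Real.sqrt (C / θ * (f x₀ ^ θ) ^ 2) := Real.sqrt_le_sqrt hsq
    _ = Real.sqrt (C / θ) * Real.sqrt ((f x₀ ^ θ) ^ 2) := by
        rw [Real.sqrt_mul (by positivity)]
    _ = Real.sqrt (C / θ) * f x₀ ^ θ := by rw [Real.sqrt_sq hfθ.le]

lemma le_essSup_aux {g : ℝ → ENNReal} {U : Set ℝ} (hU : IsOpen U) {y : ℝ} (hy : y ∈ U)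
    {φ : ℝ → ℝ} (hφ : ContinuousOn φ U)
    (hg : ∀ x ∈ U, ENNReal.ofReal (φ x) ≤ g x) :
    ENNReal.ofReal (φ y) ≤ essSup g volume := by
  by_contra hcon
  push_neg at hcon
  have hne : essSup g volume ≠ ⊤ := ne_top_of_lt hcon
  set m := (essSup g volume).toReal with hmdef
  have hm : essSup g volume = ENNReal.ofReal m := (ENNReal.ofReal_toReal hne).symm
  have hm0 : 0 ≤ m := ENNReal.toReal_nonneg
  have hmφ : m < φ y := by
    by_contra h
    push_neg at h
    rw [hm] at hcon
    exact absurd (ENNReal.ofReal_le_ofReal h) (not_le.mpr hcon)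
  set W := U ∩ φ ⁻¹' (Ioi m) with hWdef
  have hW : IsOpen W := hφ.isOpen_inter_preimage hU isOpen_Ioi
  have hyW : y ∈ W := ⟨hy, hmφ⟩
  have hpos : 0 < volume W := hW.measure_pos volume ⟨y, hyW⟩
  have hae := ENNReal.ae_le_essSup (μ := volume) g
  have hWsub : W ⊆ {x | ¬ g x ≤ essSup g volume} := by
    intro x hx hle
    have h1 : ENNReal.ofReal (φ x) ≤ essSup g volume := le_trans (hg x hx.1) hle
    rw [hm] at h1
    have h2 : φ x ≤ m := (ENNReal.ofReal_le_ofReal_iff hm0).mp h1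
    exact absurd h2 (not_le.mpr hx.2)
  have hnull : volume W = 0 := measure_mono_null hWsub hae
  rw [hnull] at hpos
  exact lt_irrefl _ hpos

theorem power_weight_inequality_sup_norm
    (θ : ℝ) (hθ : 0 < θ)
    (f : ℝ → ℝ) (hf : ContDiff ℝ (⊤ : ℕ∞) f) (hnn : ∀ x, 0 ≤ f x)
    (hsupp : HasCompactSupport (deriv f)) :
    essSup (fun x : ℝ => ENNReal.ofReal
        (Set.indicator {y : ℝ | 0 < f y} (fun y => |deriv f y| / f y ^ θ) x))
        volume ≤
      ENNReal.ofReal (1 / Real.sqrt θ) *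
        essSup (fun x : ℝ => ENNReal.ofReal
          (Set.indicator {y : ℝ | 0 < f y}
            (fun y => Real.sqrt (f y * |deriv (deriv f) y|) / f y ^ θ) x))
          volume := by
  have hfi : ContDiff ℝ (⊤ : ℕ∞) f := hf.of_le (by simp)
  have hcf : Continuous f := hfi.continuous
  have hf2 : ContDiff ℝ (⊤ : ℕ∞) (deriv f) := (contDiff_infty_iff_deriv.mp hfi).2
  have hcd2 : Continuous (deriv (deriv f)) :=
    ((contDiff_infty_iff_deriv.mp hf2).2).continuous
  set U : Set ℝ := {y : ℝ | 0 < f y} with hUdef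
  have hUopen : IsOpen U := isOpen_lt continuous_const hcf
  set RHS : ℝ → ENNReal := fun x => ENNReal.ofReal
      (Set.indicator U (fun y => Real.sqrt (f y * |deriv (deriv f) y|) / f y ^ θ) x)
    with hRHSdef
  set M := essSup RHS volume with hMdef
  have hsqθ : 0 < Real.sqrt θ := Real.sqrt_pos.mpr hθ
  refine essSup_le_of_ae_le _ (Filter.Eventually.of_forall (fun x => ?_))
  show ENNReal.ofReal (Set.indicator U (fun y => |deriv f y| / f y ^ θ) x) ≤
    ENNReal.ofReal (1 / Real.sqrt θ) * M
  by_cases hx : x ∈ U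
  · rw [Set.indicator_of_mem hx]
    by_cases hM : M = ⊤
    · rw [hM, ENNReal.mul_top (by
        simp only [ne_eq, ENNReal.ofReal_eq_zero, not_le]
        positivity)]
      exact le_top
    · -- M finite
      set C' := M.toReal with hC'def
      have hC' : 0 ≤ C' := ENNReal.toReal_nonneg
      have hMC' : M = ENNReal.ofReal C' := (ENNReal.ofReal_toReal hM).symm
      -- each point value of the RHS integrand is ≤ M
      have hptwise : ∀ y ∈ U, Real.sqrt (f y * |deriv (deriv f) y|) / f y ^ θ ≤ C' := by
        intro y hy
        have hcont : ContinuousOn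
            (fun y => Real.sqrt (f y * |deriv (deriv f) y|) / f y ^ θ) U := by
          apply ContinuousOn.div
          · exact ((hcf.mul hcd2.abs).sqrt).continuousOn
          · exact (hcf.rpow_const (fun z => Or.inr hθ.le)).continuousOn
          · intro z hz
            exact ne_of_gt (Real.rpow_pos_of_pos hz θ)
        have hle : ENNReal.ofReal (Real.sqrt (f y * |deriv (deriv f) y|) / f y ^ θ) ≤ M := by
          refine le_essSup_aux hUopen hy hcont (fun z hz => ?_)
          simp only [hRHSdef, Set.indicator_of_mem hz]
          exact le_refl _
        rw [hMC'] at hle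
        exact (ENNReal.ofReal_le_ofReal_iff hC').mp hle
      -- translate to the bound needed by key_abs
      have hbound : ∀ y, 0 < f y → f y * |deriv (deriv f) y| ≤ (C' ^ 2) * (f y ^ θ) ^ 2 := by
        intro y hy
        have h1 := hptwise y hy
        have hfθ : 0 < f y ^ θ := Real.rpow_pos_of_pos hy θ
        have h2 : Real.sqrt (f y * |deriv (deriv f) y|) ≤ C' * f y ^ θ := by
          rw [div_le_iff₀ hfθ] at h1
          exact h1
        have h3 : f y * |deriv (deriv f) y| = Real.sqrt (f y * |deriv (deriv f) y|) ^ 2 :=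
          (Real.sq_sqrt (by positivity)).symm
        rw [h3]
        calc Real.sqrt (f y * |deriv (deriv f) y|) ^ 2 ≤ (C' * f y ^ θ) ^ 2 := by
              apply pow_le_pow_left₀ (Real.sqrt_nonneg _) h2
          _ = C' ^ 2 * (f y ^ θ) ^ 2 := by ring
      have hkey := key_abs θ (C' ^ 2) hθ (by positivity) f hf hnn hsupp hbound x hx
      have hsqrtC : Real.sqrt (C' ^ 2 / θ) = C' / Real.sqrt θ := by
        rw [Real.sqrt_div (sq_nonneg C') θ, Real.sqrt_sq hC']
      have hfθ : 0 < f x ^ θ := Real.rpow_pos_of_pos hx θ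
      have h5 : |deriv f x| / f x ^ θ ≤ 1 / Real.sqrt θ * C' := by
        rw [div_le_iff₀ hfθ]
        calc |deriv f x| ≤ C' / Real.sqrt θ * f x ^ θ := by
              rw [← hsqrtC]; exact hkey
          _ = 1 / Real.sqrt θ * C' * f x ^ θ := by ring
      rw [hMC', ← ENNReal.ofReal_mul (by positivity : (0:ℝ) ≤ 1 / Real.sqrt θ)]
      exact ENNReal.ofReal_le_ofReal h5
  · rw [Set.indicator_of_notMem hx]
    simp
end

section
/- Let q ≥ 1, a, b ∈ ℝ with a < b, g ∈ L^q(a,b), τ : (0,∞) → (0,∞) continuous satisfying the structure assumptions of Definition 2 (so that h = h_{q,τ}, H = H_{q,τ} are defined with H' = h). Suppose f ∈ W^{2,1}_loc(a,b) is positive, solves f'' = g τ(f) a.e., and satisfies liminf_{R→b} |f'(R)|^{2q−2} f'(R) H(f(R)) − limsup_{r→a} |f'(r)|^{2q−2} f'(r) H(f(r)) ≤ 0. Then ∫_a^b |f'(x)|^{2q} h(f(x)) dx ≤ (2q−1)^q ∫_a^b |g(x)|^q dx. -/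
open MeasureTheory Set Filter Asymptotics
open scoped Topology

/-
The flux `φ = |f'|^(2q-2) f' H(f)` satisfies, by the equation `f'' = g τ(f)` and `H' = h`,
`φ' = |f'|^(2q) h(f) + (2q-1) |f'|^(2q-2) g τ(f) H(f)`. Since `τ |H| = h^((q-1)/q)`, Young's
inequality with exponents `q` and `q/(q-1)` bounds the second term by
`((q-1)/q) |f'|^(2q) h(f) + ((2q-1)^q/q) |g|^q`. Integrating over `(a, b)`, the integral of `φ'` is
the difference of the boundary values of `φ`, which is `≤ 0` by hypothesis; absorbing the
`(q-1)/q` part of the left-hand side gives the estimate.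
-/

theorem hasDerivAt_abs_rpow_mul_self {p : ℝ} (hp : 0 ≤ p) (t : ℝ) :
    HasDerivAt (fun t : ℝ => |t| ^ p * t) ((p + 1) * |t| ^ p) t := by
  rcases hp.eq_or_lt with rfl | hp
  · simpa using hasDerivAt_id' t
  rcases eq_or_ne t 0 with rfl | ht
  · have hsmall : (fun s : ℝ => |s| ^ p) =o[𝓝 0] fun _ => (1 : ℝ) := by
      refine isLittleO_one_iff ℝ |>.mpr ?_
      simpa [Real.zero_rpow hp.ne'] using
        (continuous_abs.tendsto (0 : ℝ)).rpow_const (Or.inr hp.le)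
    rw [hasDerivAt_iff_isLittleO_nhds_zero]
    simpa [Real.zero_rpow hp.ne'] using hsmall.mul_isBigO (isBigO_refl (fun s : ℝ => s) _)
  · have hne : |t| ≠ 0 := abs_ne_zero.mpr ht
    refine (((hasDerivAt_abs ht).rpow_const (p := p) (Or.inl hne)).mul
      (hasDerivAt_id' t)).congr_deriv ?_
    have hsign : (SignType.sign t : ℝ) * t = |t| := sign_mul_self t
    rw [Real.rpow_sub_one hne]
    field_simp
    linear_combination p * hsign

theorem HasDerivAt.abs_rpow_mul_self {p : ℝ} (hp : 0 ≤ p) {u : ℝ → ℝ} {u' x : ℝ}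
    (hu : HasDerivAt u u' x) :
    HasDerivAt (fun y => |u y| ^ p * u y) ((p + 1) * |u x| ^ p * u') x :=
  (hasDerivAt_abs_rpow_mul_self hp (u x)).comp x hu

theorem abs_rpow_mul_self_mul_self {p : ℝ} (hp : 0 ≤ p) (t : ℝ) :
    |t| ^ p * t * t = |t| ^ (p + 2) := by
  have h2 : |t| ^ (p + 2) = |t| ^ p * |t| ^ (2 : ℕ) := by
    exact_mod_cast Real.rpow_add_natCast' (abs_nonneg t) (y := p) (n := 2) (by positivity)
  rw [h2, sq_abs]
  ring

theorem mul_rpow_le_young {q x y : ℝ} (hq : 1 ≤ q) (hx : 0 ≤ x) (hy : 0 ≤ y) :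
    x * y ^ ((q - 1) / q) ≤ x ^ q / q + (q - 1) / q * y := by
  rcases hq.eq_or_lt with rfl | hq
  · simp
  convert Real.young_inequality_of_nonneg hx (Real.rpow_nonneg hy _)
    (Real.HolderConjugate.conjExponent hq) using 2
  have hexp : (q - 1) / q * (q / (q - 1)) = 1 := by field_simp
  rw [Real.conjExponent, ← Real.rpow_mul hy, hexp, Real.rpow_one]
  field_simp

theorem exists_continuousOn_Icc_eqOn_Ioo_of_hasDerivAt {φ φ' : ℝ → ℝ} {a b : ℝ}
    (hab : a < b) (hderiv : ∀ x ∈ Ioo a b, HasDerivAt φ (φ' x) x)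
    (hint : IntegrableOn φ' (Ioo a b)) :
    ∃ ψ : ℝ → ℝ, ContinuousOn ψ (Icc a b) ∧ EqOn φ ψ (Ioo a b) := by
  obtain ⟨c, hc⟩ := nonempty_Ioo.mpr hab
  have hint' : IntervalIntegrable φ' volume a b :=
    (intervalIntegrable_iff_integrableOn_Ioo_of_le hab.le).mpr hint
  refine ⟨fun x => φ c + ∫ t in c..x, φ' t, ?_, fun x hx => ?_⟩
  · have := intervalIntegral.continuousOn_primitive_interval' hint'
      (by rw [uIcc_of_le hab.le]; exact Ioo_subset_Icc_self hc)
    rw [uIcc_of_le hab.le] at this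
    exact continuousOn_const.add this
  · dsimp only
    have hsub : uIcc c x ⊆ Ioo a b := ordConnected_Ioo.uIcc_subset hc hx
    rw [intervalIntegral.integral_eq_sub_of_hasDerivAt (fun y hy => hderiv y (hsub hy))
      ((hint.mono_set hsub).intervalIntegrable)]
    ring

theorem setIntegral_le_liminf_sub_limsup_add {φ F G : ℝ → ℝ} {a b : ℝ} (hab : a < b)
    (hφ : ∀ x ∈ Ioo a b, DifferentiableAt ℝ φ x)
    (hF : IntegrableOn F (Ioo a b)) (hG : IntegrableOn G (Ioo a b))
    (hle : ∀ᵐ x, x ∈ Ioo a b → |deriv φ x - F x| ≤ G x) :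
    ∫ x in Ioo a b, F x ≤
      liminf φ (𝓝[<] b) - limsup φ (𝓝[>] a) + ∫ x in Ioo a b, G x := by
  have hle' : ∀ᵐ x ∂volume.restrict (Ioo a b), |deriv φ x - F x| ≤ G x :=
    (ae_restrict_iff' measurableSet_Ioo).mpr hle
  have hdiff : IntegrableOn (fun x => deriv φ x - F x) (Ioo a b) :=
    hG.mono' ((measurable_deriv φ).aestronglyMeasurable.sub hF.aestronglyMeasurable) hle'
  have hderiv : IntegrableOn (deriv φ) (Ioo a b) :=
    (hdiff.add hF).congr_fun (fun x _ => sub_add_cancel _ _) measurableSet_Ioo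
  obtain ⟨ψ, hψc, hφψ⟩ := exists_continuousOn_Icc_eqOn_Ioo_of_hasDerivAt hab
    (fun x hx => (hφ x hx).hasDerivAt) hderiv
  have hb : Tendsto φ (𝓝[<] b) (𝓝 (ψ b)) := by
    rw [← nhdsWithin_Ioo_eq_nhdsLT hab]
    exact ((hψc b (right_mem_Icc.mpr hab.le)).mono Ioo_subset_Icc_self).congr'
      (eventuallyEq_nhdsWithin_of_eqOn hφψ).symm
  have ha : Tendsto φ (𝓝[>] a) (𝓝 (ψ a)) := by
    rw [← nhdsWithin_Ioo_eq_nhdsGT hab]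
    exact ((hψc a (left_mem_Icc.mpr hab.le)).mono Ioo_subset_Icc_self).congr'
      (eventuallyEq_nhdsWithin_of_eqOn hφψ).symm
  have hFTC : ∫ x in Ioo a b, deriv φ x = ψ b - ψ a := by
    rw [← integral_Ioc_eq_integral_Ioo, ← intervalIntegral.integral_of_le hab.le]
    exact intervalIntegral.integral_eq_sub_of_hasDerivAt_of_tendsto hab
      (fun x hx => (hφ x hx).hasDerivAt)
      ((intervalIntegrable_iff_integrableOn_Ioo_of_le hab.le).mpr hderiv) ha hb
  rw [hb.liminf_eq, ha.limsup_eq, ← hFTC, ← integral_add hderiv hG]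
  refine integral_mono_ae hF (hderiv.add hG) ?_
  filter_upwards [hle'] with x hx
  linarith [neg_abs_le (deriv φ x - F x)]

/-- The properties of `h = h_{q,τ}` and `H = H_{q,τ}` (Definition 2) on which the estimate rests. -/
structure IsGradientWeight (q : ℝ) (τ h H : ℝ → ℝ) : Prop where
  hasDerivAt : ∀ t ∈ Ioi (0 : ℝ), HasDerivAt H (h t) t
  nonneg : ∀ t ∈ Ioi (0 : ℝ), 0 ≤ h t
  abs_mul_eq : ∀ t ∈ Ioi (0 : ℝ), |τ t * H t| = h t ^ ((q - 1) / q)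

theorem exists_sign_eq_of_pos_or_neg {s : Set ℝ} {u : ℝ → ℝ}
    (hu : (∀ t ∈ s, 0 < u t) ∨ (∀ t ∈ s, u t < 0)) :
    ∃ σ : ℝ, |σ| = 1 ∧ ∀ t ∈ s, Real.sign (u t) = σ ∧ |u t| = σ * u t := by
  rcases hu with hu | hu
  · exact ⟨1, by norm_num, fun t ht =>
      ⟨Real.sign_of_pos (hu t ht), by simp [abs_of_pos (hu t ht)]⟩⟩
  · exact ⟨-1, by norm_num, fun t ht =>
      ⟨Real.sign_of_neg (hu t ht), by simp [abs_of_neg (hu t ht)]⟩⟩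

theorem isGradientWeight_one {τ τ' h H : ℝ → ℝ} (hτ : ∀ t ∈ Ioi (0 : ℝ), 0 < τ t)
    (hτ' : ∀ t ∈ Ioi (0 : ℝ), HasDerivAt τ (τ' t) t)
    (hsign : (∀ t ∈ Ioi (0 : ℝ), 0 < τ' t) ∨ (∀ t ∈ Ioi (0 : ℝ), τ' t < 0))
    (hform : ∀ t ∈ Ioi (0 : ℝ),
      h t = |τ' t| / τ t ^ 2 ∧ H t = -Real.sign (τ' t) / τ t) :
    IsGradientWeight 1 τ h H := by
  obtain ⟨σ, hσ, hστ'⟩ := exists_sign_eq_of_pos_or_neg hsign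
  have hH : ∀ t ∈ Ioi (0 : ℝ), H t = -σ / τ t := fun t ht => by
    rw [(hform t ht).2, (hστ' t ht).1]
  refine ⟨fun t ht => ?_, fun t ht => ?_, fun t ht => ?_⟩
  · have hdiv := (hasDerivAt_const t (-σ)).div (hτ' t ht) (hτ t ht).ne'
    refine (hdiv.congr_of_eventuallyEq ?_).congr_deriv ?_
    · filter_upwards [Ioi_mem_nhds ht] with s hs using hH s hs
    · rw [(hform t ht).1, (hστ' t ht).2]
      ring
  · rw [(hform t ht).1]
    positivity
  · rw [abs_mul, hH t ht, abs_div, abs_neg, hσ, abs_of_pos (hτ t ht)]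
    simp [(hτ t ht).ne']

theorem isGradientWeight_of_one_lt {q : ℝ} (hq : 1 < q) {τ K h H : ℝ → ℝ}
    (hτ : ∀ t ∈ Ioi (0 : ℝ), 0 < τ t)
    (hK : ∀ t ∈ Ioi (0 : ℝ), HasDerivAt K (τ t ^ (q / (q - 1))) t)
    (hsign : (∀ t ∈ Ioi (0 : ℝ), 0 < K t) ∨ (∀ t ∈ Ioi (0 : ℝ), K t < 0))
    (hform : ∀ t ∈ Ioi (0 : ℝ),
      h t = (q - 1) ^ q * |K t| ^ (-q) * τ t ^ (q / (q - 1)) ∧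
      H t = -Real.sign (K t) * (q - 1) ^ (q - 1) * |K t| ^ (1 - q)) :
    IsGradientWeight q τ h H := by
  obtain ⟨σ, hσ, hσK⟩ := exists_sign_eq_of_pos_or_neg hsign
  have hσσ : σ * σ = 1 := by rw [← abs_mul_abs_self, hσ, one_mul]
  have hq1 : 0 < q - 1 := by linarith
  have hH (t : ℝ) (ht : t ∈ Ioi (0 : ℝ)) : H t = -σ * (q - 1) ^ (q - 1) * |K t| ^ (1 - q) := by
    rw [(hform t ht).2, (hσK t ht).1]
  have hKpos : ∀ t ∈ Ioi (0 : ℝ), 0 < |K t| := fun t ht => by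
    rcases hsign with hpos | hneg
    · exact abs_pos.mpr (hpos t ht).ne'
    · exact abs_pos.mpr (hneg t ht).ne
  refine ⟨fun t ht => ?_, fun t ht => ?_, fun t ht => ?_⟩
  · have habsK : HasDerivAt (fun s => |K s|) (σ * τ t ^ (q / (q - 1))) t :=
      ((hK t ht).const_mul σ).congr_of_eventuallyEq
        (by filter_upwards [Ioi_mem_nhds ht] with s hs using (hσK s hs).2)
    refine (((habsK.rpow_const (p := 1 - q) (Or.inl (hKpos t ht).ne')).const_mul
      (-σ * (q - 1) ^ (q - 1))).congr_of_eventuallyEq ?_).congr_deriv ?_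
    · filter_upwards [Ioi_mem_nhds ht] with s hs using hH s hs
    · have hpow : (q - 1) ^ (q - 1) * (q - 1) = (q - 1) ^ q := by
        rw [← Real.rpow_add_one hq1.ne']; ring_nf
      rw [(hform t ht).1, ← hpow, show 1 - q - 1 = -q by ring]
      linear_combination (q - 1) ^ (q - 1) * (q - 1) * τ t ^ (q / (q - 1)) * |K t| ^ (-q) * hσσ
  · rw [(hform t ht).1]
    have := hKpos t ht
    have := hτ t ht
    positivity
  · have hτt := hτ t ht
    have hKt := hKpos t ht
    rw [(hform t ht).1, hH t ht, abs_mul, abs_of_pos hτt, abs_mul, abs_mul, abs_neg, hσ,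
      abs_of_pos (Real.rpow_pos_of_pos hq1 _), abs_of_pos (Real.rpow_pos_of_pos hKt _),
      Real.mul_rpow (by positivity) (by positivity), Real.mul_rpow (by positivity) (by positivity),
      ← Real.rpow_mul hq1.le, ← Real.rpow_mul hKt.le, ← Real.rpow_mul hτt.le,
      show q * ((q - 1) / q) = q - 1 by field_simp,
      show -q * ((q - 1) / q) = 1 - q by field_simp; ring,
      show q / (q - 1) * ((q - 1) / q) = 1 by field_simp, Real.rpow_one]
    ring

theorem hasDerivAt_flux {q c x : ℝ} (hq : 1 ≤ q) {H f : ℝ → ℝ}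
    (hf : DifferentiableAt ℝ f x) (hf' : DifferentiableAt ℝ (deriv f) x)
    (hH : HasDerivAt H c (f x)) :
    HasDerivAt (fun y => |deriv f y| ^ (2 * q - 2) * deriv f y * H (f y))
      ((2 * q - 1) * |deriv f x| ^ (2 * q - 2) * deriv (deriv f) x * H (f x) +
        |deriv f x| ^ (2 * q) * c) x := by
  have hp : (0 : ℝ) ≤ 2 * q - 2 := by linarith
  refine ((hf'.hasDerivAt.abs_rpow_mul_self hp).mul (hH.comp x hf.hasDerivAt)).congr_deriv ?_
  have hsq := abs_rpow_mul_self_mul_self hp (deriv f x)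
  rw [show 2 * q - 2 + 2 = 2 * q by ring] at hsq
  rw [Function.comp_apply, ← hsq]
  ring

theorem abs_deriv_flux_sub_le {q γ x : ℝ} (hq : 1 ≤ q) {τ h H f : ℝ → ℝ}
    (hW : IsGradientWeight q τ h H) (hf : DifferentiableAt ℝ f x)
    (hf' : DifferentiableAt ℝ (deriv f) x) (hpos : 0 < f x)
    (hode : deriv (deriv f) x = γ * τ (f x)) :
    |deriv (fun y => |deriv f y| ^ (2 * q - 2) * deriv f y * H (f y)) x -
        |deriv f x| ^ (2 * q) * h (f x)| ≤
      (2 * q - 1) ^ q / q * |γ| ^ q + (q - 1) / q * (|deriv f x| ^ (2 * q) * h (f x)) := by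
  have hc := hW.nonneg (f x) hpos
  rw [(hasDerivAt_flux hq hf hf' (hW.hasDerivAt (f x) hpos)).deriv, add_sub_cancel_right, hode]
  have hsplit : |deriv f x| ^ (2 * q - 2) * h (f x) ^ ((q - 1) / q) =
      (|deriv f x| ^ (2 * q) * h (f x)) ^ ((q - 1) / q) := by
    rw [Real.mul_rpow (by positivity) hc, ← Real.rpow_mul (abs_nonneg _),
      show 2 * q * ((q - 1) / q) = 2 * q - 2 by field_simp]
  calc |(2 * q - 1) * |deriv f x| ^ (2 * q - 2) * (γ * τ (f x)) * H (f x)|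
      = ((2 * q - 1) * |γ|) * (|deriv f x| ^ (2 * q - 2) * |τ (f x) * H (f x)|) := by
        rw [abs_mul, abs_mul, abs_mul, abs_mul, abs_mul, abs_of_pos (by linarith : 0 < 2 * q - 1),
          abs_of_nonneg (Real.rpow_nonneg (abs_nonneg _) _)]
        ring
    _ = ((2 * q - 1) * |γ|) * (|deriv f x| ^ (2 * q) * h (f x)) ^ ((q - 1) / q) := by
        rw [hW.abs_mul_eq (f x) hpos, hsplit]
    _ ≤ ((2 * q - 1) * |γ|) ^ q / q + (q - 1) / q * (|deriv f x| ^ (2 * q) * h (f x)) :=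
        mul_rpow_le_young hq (mul_nonneg (by linarith) (abs_nonneg γ))
          (mul_nonneg (Real.rpow_nonneg (abs_nonneg _) _) hc)
    _ = _ := by rw [Real.mul_rpow (by linarith) (abs_nonneg γ), mul_div_right_comm]

theorem eigenvalue_gradient_estimate_general
    (q : ℝ) (hq : 1 ≤ q)
    (a b : ℝ) (hab : a < b)
    (g : ℝ → ℝ) (hg : IntegrableOn (fun x => |g x| ^ q) (Ioo a b))
    (τ h H : ℝ → ℝ)
    (hτpos : ∀ t ∈ Ioi (0 : ℝ), 0 < τ t)
    (hcase1 : q = 1 → ∃ τ' : ℝ → ℝ,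
      (∀ t ∈ Ioi (0 : ℝ), HasDerivAt τ (τ' t) t) ∧
      ((∀ t ∈ Ioi (0 : ℝ), 0 < τ' t) ∨ (∀ t ∈ Ioi (0 : ℝ), τ' t < 0)) ∧
      (∀ t ∈ Ioi (0 : ℝ),
        h t = |τ' t| / (τ t) ^ 2 ∧ H t = -(Real.sign (τ' t)) / τ t))
    (hcase2 : 1 < q → ∃ K : ℝ → ℝ,
      (∀ t ∈ Ioi (0 : ℝ), HasDerivAt K (τ t ^ (q / (q - 1))) t) ∧
      ((∀ t ∈ Ioi (0 : ℝ), 0 < K t) ∨ (∀ t ∈ Ioi (0 : ℝ), K t < 0)) ∧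
      (∀ t ∈ Ioi (0 : ℝ),
        h t = (q - 1) ^ q * |K t| ^ (-q) * τ t ^ (q / (q - 1)) ∧
        H t = -(Real.sign (K t)) * (q - 1) ^ (q - 1) * |K t| ^ (1 - q)))
    (f : ℝ → ℝ)
    (hfd : ∀ x ∈ Ioo a b, DifferentiableAt ℝ f x)
    (hfd' : ∀ x ∈ Ioo a b, DifferentiableAt ℝ (deriv f) x)
    (hpos : ∀ x ∈ Ioo a b, 0 < f x)
    (hode : ∀ᵐ x, x ∈ Ioo a b → deriv (deriv f) x = g x * τ (f x))
    (hbdry :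
      liminf (fun R => |deriv f R| ^ (2 * q - 2) * deriv f R * H (f R)) (nhdsWithin b (Iio b)) -
        limsup (fun r => |deriv f r| ^ (2 * q - 2) * deriv f r * H (f r)) (nhdsWithin a (Ioi a))
        ≤ 0) :
    ∫ x in Ioo a b, |deriv f x| ^ (2 * q) * h (f x) ≤
      (2 * q - 1) ^ q * ∫ x in Ioo a b, |g x| ^ q := by
  have hq0 : 0 < q := by linarith
  have hW : IsGradientWeight q τ h H := by
    rcases hq.eq_or_lt with rfl | hq1
    · obtain ⟨τ', hτ', hsign, hform⟩ := hcase1 rfl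
      exact isGradientWeight_one hτpos hτ' hsign hform
    · obtain ⟨K, hK, hsign, hform⟩ := hcase2 hq1
      exact isGradientWeight_of_one_lt hq1 hτpos hK hsign hform
  have hgq : 0 ≤ ∫ x in Ioo a b, |g x| ^ q :=
    setIntegral_nonneg measurableSet_Ioo fun x _ => by positivity
  by_cases hF : IntegrableOn (fun x => |deriv f x| ^ (2 * q) * h (f x)) (Ioo a b)
  swap
  · -- the Bochner integral of a non-integrable function is `0`
    rw [integral_undef hF]
    exact mul_nonneg (Real.rpow_nonneg (by linarith) _) hgq
  have key := setIntegral_le_liminf_sub_limsup_add hab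
    (G := fun x =>
      (2 * q - 1) ^ q / q * |g x| ^ q + (q - 1) / q * (|deriv f x| ^ (2 * q) * h (f x)))
    (fun x hx => (hasDerivAt_flux hq (hfd x hx) (hfd' x hx)
      (hW.hasDerivAt (f x) (hpos x hx))).differentiableAt) hF
    ((hg.const_mul _).add (hF.const_mul _))
    (by filter_upwards [hode] with x hx hmem using
      abs_deriv_flux_sub_le hq hW (hfd x hmem) (hfd' x hmem) (hpos x hmem) (hx hmem))
  rw [integral_add (hg.const_mul _) (hF.const_mul _), integral_const_mul, integral_const_mul] at key
  set I := ∫ x in Ioo a b, |deriv f x| ^ (2 * q) * h (f x)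
  have hsplit : (q - 1) / q * I = I - I / q := by field_simp
  rw [← div_le_div_iff_of_pos_right hq0, mul_div_right_comm]
  linarith

theorem eigenvalue_gradient_estimate
    (q : ℝ) (hq : 1 ≤ q)
    (a b : ℝ) (hab : a < b)
    (g : ℝ → ℝ) (hg : IntegrableOn (fun x => |g x| ^ q) (Ioo a b))
    (τ h H : ℝ → ℝ)
    (hτc : ContinuousOn τ (Ioi 0)) (hτpos : ∀ t ∈ Ioi (0 : ℝ), 0 < τ t)
    (hcase1 : q = 1 → ∃ τ' : ℝ → ℝ,
      (∀ t ∈ Ioi (0 : ℝ), HasDerivAt τ (τ' t) t) ∧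
      ((∀ t ∈ Ioi (0 : ℝ), 0 < τ' t) ∨ (∀ t ∈ Ioi (0 : ℝ), τ' t < 0)) ∧
      (∀ t ∈ Ioi (0 : ℝ),
        h t = |τ' t| / (τ t) ^ 2 ∧ H t = -(Real.sign (τ' t)) / τ t))
    (hcase2 : 1 < q → ∃ K : ℝ → ℝ,
      (∀ t ∈ Ioi (0 : ℝ), HasDerivAt K (τ t ^ (q / (q - 1))) t) ∧
      ((∀ t ∈ Ioi (0 : ℝ), 0 < K t) ∨ (∀ t ∈ Ioi (0 : ℝ), K t < 0)) ∧
      (∀ t ∈ Ioi (0 : ℝ),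
        h t = (q - 1) ^ q * |K t| ^ (-q) * τ t ^ (q / (q - 1)) ∧
        H t = -(Real.sign (K t)) * (q - 1) ^ (q - 1) * |K t| ^ (1 - q)))
    (f : ℝ → ℝ)
    (hfd : ∀ x ∈ Ioo a b, DifferentiableAt ℝ f x)
    (hfd' : ∀ x ∈ Ioo a b, DifferentiableAt ℝ (deriv f) x)
    (hf'' : LocallyIntegrableOn (deriv (deriv f)) (Ioo a b))
    (hpos : ∀ x ∈ Ioo a b, 0 < f x)
    (hode : ∀ᵐ x, x ∈ Ioo a b → deriv (deriv f) x = g x * τ (f x))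
    (hbdry :
      liminf (fun R => |deriv f R| ^ (2 * q - 2) * deriv f R * H (f R)) (nhdsWithin b (Iio b)) -
        limsup (fun r => |deriv f r| ^ (2 * q - 2) * deriv f r * H (f r)) (nhdsWithin a (Ioi a))
        ≤ 0) :
    ∫ x in Ioo a b, |deriv f x| ^ (2 * q) * h (f x) ≤
      (2 * q - 1) ^ q * ∫ x in Ioo a b, |g x| ^ q :=
  eigenvalue_gradient_estimate_general q hq a b hab g hg τ h H hτpos hcase1 hcase2 f hfd hfd' hpos
    hode hbdry
end
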